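/- arXiv:2510.17561 — 8 statements merged into one kernel-verified Lean document; each statement's English description precedes it below -/
import Mathlib

section
/- Let αx and αy be strictly positive real numbers. Then the cubic polynomial Q_{(αx,αy)}(X) = 1 − (αx·αy + αx + αy)·X² − 2·αx·αy·X³ has exactly one strictly positive real root (denoted τ⁺(αx,αy)). -/
open Polynomial Set

/-! On `[0, ∞)` the map `t ↦ 1 - a t² - b t³` with `a, b > 0` is continuous and strictly
decreasing, positive at `0` and negative far out, so it crosses zero exactly once. -/

theorem existsUnique_pos_eq_zero_of_strictAntiOn {f : ℝ → ℝ} {T : ℝ} (hcont : Continuous f)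
    (hanti : StrictAntiOn f (Ici 0)) (hT : 0 ≤ T) (hf0 : 0 < f 0) (hfT : f T < 0) :
    ∃! τ : ℝ, 0 < τ ∧ f τ = 0 := by
  obtain ⟨τ, hτ, hfτ⟩ : ∃ τ ∈ Icc 0 T, f τ = 0 :=
    intermediate_value_Icc' hT hcont.continuousOn ⟨hfT.le, hf0.le⟩
  have hτ0 : τ ≠ 0 := by
    rintro rfl
    exact hf0.ne' hfτ
  refine ⟨τ, ⟨lt_of_le_of_ne hτ.1 hτ0.symm, hfτ⟩, fun σ ⟨hσ, hfσ⟩ => ?_⟩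
  exact hanti.injOn (mem_Ici.2 hσ.le) (mem_Ici.2 hτ.1) (hfσ.trans hfτ.symm)

section Cubic

variable {a b : ℝ}

theorem strictAntiOn_one_sub_mul_sq_sub_mul_cube (ha : 0 ≤ a) (hb : 0 < b) :
    StrictAntiOn (fun t : ℝ => 1 - a * t ^ 2 - b * t ^ 3) (Ici 0) := by
  intro s hs t ht hst
  have hsq : s ^ 2 ≤ t ^ 2 := pow_le_pow_left₀ hs hst.le 2
  have hcube : s ^ 3 < t ^ 3 := pow_lt_pow_left₀ hst hs (by norm_num)
  nlinarith [mul_le_mul_of_nonneg_left hsq ha, mul_lt_mul_of_pos_left hcube hb]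

theorem one_sub_mul_sq_sub_mul_cube_neg (ha : 0 ≤ a) (hb : 0 < b) :
    1 - a * (1 + b⁻¹) ^ 2 - b * (1 + b⁻¹) ^ 3 < 0 := by
  set T := 1 + b⁻¹
  have hT : 1 ≤ T := le_add_of_nonneg_right (inv_nonneg.2 hb.le)
  have hbT : 1 < b * T := by
    rw [mul_add, mul_inv_cancel₀ hb.ne', mul_one]
    linarith
  calc 1 - a * T ^ 2 - b * T ^ 3 ≤ 1 - b * T := by
        have hcube : T ≤ T ^ 3 := by simpa using pow_le_pow_right₀ hT (by norm_num : 1 ≤ 3)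
        nlinarith [mul_nonneg ha (sq_nonneg T), mul_le_mul_of_nonneg_left hcube hb.le]
    _ < 0 := by linarith

end Cubic

/-- For `αx, αy > 0`, the cubic polynomial
`Q_{(αx,αy)}(X) = 1 − (αx·αy + αx + αy)·X² − 2·αx·αy·X³`
has exactly one strictly positive real root. -/
theorem cubic_Q_has_unique_positive_root (αx αy : ℝ) (hαx : 0 < αx) (hαy : 0 < αy) :
    ∃! τ : ℝ, 0 < τ ∧
      (C 1 - C (αx * αy + αx + αy) * X ^ 2 - C (2 * (αx * αy)) * X ^ 3 : ℝ[X]).IsRoot τ := by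
  have ha : 0 ≤ αx * αy + αx + αy := by positivity
  have hb : 0 < 2 * (αx * αy) := by positivity
  simp only [IsRoot.def, eval_sub, eval_mul, eval_C, eval_pow, eval_X]
  exact existsUnique_pos_eq_zero_of_strictAntiOn (by fun_prop)
    (strictAntiOn_one_sub_mul_sq_sub_mul_cube ha hb) (by positivity) (by norm_num)
    (one_sub_mul_sq_sub_mul_cube_neg ha hb)
end

section
/- Let λx, λy > 0 and ρ ∈ (−1,1). Then the cubic polynomial R_{(λx,λy,ρ)}(X) = 1 + (1 − ρ²·λx·λy − λx − λy)·X + (λx·λy − λx − λy)·X² + λx·λy·X³ has exactly two strictly positive real roots counted with multiplicity; i.e., the multiset of real roots of R_{(λx,λy,ρ)} (with multiplicity) contains exactly two strictly positive elements, denoted r⁻(λx,λy,ρ) ≤ r⁺(λx,λy,ρ). -/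
open Polynomial

/-!
Write `R(x) = (1 + x)(1 - λx x)(1 - λy x) - ρ² λx λy x`. For `ρ = 0` the roots are `-1`, `1/λx`
and `1/λy`. For `ρ ≠ 0` the values `R(-2) < 0 < R(0)`, `R(1/λx) = -ρ² λy < 0` and
`R(1 + 1/λx + 1/λy) > 0` give three distinct real roots, one negative and two positive.
-/

theorem Polynomial.roots_eq_of_nodup_of_natDegree_le {R : Type*} [CommRing R] [IsDomain R]
    {p : R[X]} (hp : p ≠ 0) {s : Multiset R} (hs : s.Nodup) (hroots : ∀ x ∈ s, p.IsRoot x)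
    (hdeg : p.natDegree ≤ Multiset.card s) : p.roots = s :=
  (Multiset.eq_of_le_of_card_le ((Multiset.le_iff_subset hs).2 fun x hx ↦
    (mem_roots hp).2 (hroots x hx)) ((card_roots' p).trans hdeg)).symm

theorem Polynomial.exists_isRoot_mem_Ioo_of_mul_eval_neg {p : ℝ[X]} {a b : ℝ} (hab : a ≤ b)
    (h : p.eval a * p.eval b < 0) : ∃ x ∈ Set.Ioo a b, p.IsRoot x := by
  rcases mul_neg_iff.1 h with ⟨ha, hb⟩ | ⟨ha, hb⟩
  · exact intermediate_value_Ioo' hab p.continuousOn ⟨hb, ha⟩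
  · exact intermediate_value_Ioo hab p.continuousOn ⟨ha, hb⟩

theorem Multiset.card_filter_pos_triple {a b c : ℝ} (ha : a ≤ 0) (hb : 0 < b) (hc : 0 < c) :
    (({a, b, c} : Multiset ℝ).filter (fun x ↦ 0 < x)).card = 2 := by
  simp [Multiset.filter_singleton, ha.not_gt, hb, hc]

noncomputable def cubicR (lx ly ρ : ℝ) : ℝ[X] :=
  C 1 + C (1 - ρ ^ 2 * lx * ly - lx - ly) * X + C (lx * ly - lx - ly) * X ^ 2 +
    C (lx * ly) * X ^ 3

namespace cubicR

variable {lx ly ρ : ℝ}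

theorem eval_eq (x : ℝ) :
    (cubicR lx ly ρ).eval x = (1 + x) * (1 - lx * x) * (1 - ly * x) - ρ ^ 2 * lx * ly * x := by
  simp only [cubicR, eval_add, eval_mul, eval_C, eval_X, eval_pow]
  ring

theorem natDegree_eq (hlx : lx ≠ 0) (hly : ly ≠ 0) : (cubicR lx ly ρ).natDegree = 3 := by
  unfold cubicR
  compute_degree!

theorem ne_zero : cubicR lx ly ρ ≠ 0 := fun h ↦ by
  simpa [h] using eval_eq (lx := lx) (ly := ly) (ρ := ρ) 0

theorem roots_of_rho_eq_zero (hlx : lx ≠ 0) (hly : ly ≠ 0) :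
    (cubicR lx ly 0).roots = {-1, lx⁻¹, ly⁻¹} := by
  have hfactor : cubicR lx ly 0 =
      C (lx * ly) * (({-1, lx⁻¹, ly⁻¹} : Multiset ℝ).map fun a ↦ X - C a).prod :=
    Polynomial.funext fun x ↦ by
      simp only [eval_eq, Multiset.insert_eq_cons, Multiset.map_cons, Multiset.map_singleton,
        Multiset.prod_cons, Multiset.prod_singleton, eval_mul, eval_C, eval_sub, eval_X]
      field_simp
      ring
  rw [hfactor, roots_C_mul _ (mul_ne_zero hlx hly), roots_multiset_prod_X_sub_C]

theorem eval_zero : (cubicR lx ly ρ).eval 0 = 1 := by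
  simp [eval_eq]

theorem eval_neg_two_neg (hlx : 0 < lx) (hly : 0 < ly) (hρ : ρ ^ 2 < 1) :
    (cubicR lx ly ρ).eval (-2) < 0 := by
  rw [eval_eq]
  nlinarith [mul_pos hlx hly]

theorem eval_inv_left (hlx : lx ≠ 0) : (cubicR lx ly ρ).eval lx⁻¹ = -(ρ ^ 2 * ly) := by
  rw [eval_eq]
  field_simp
  ring

theorem eval_one_add_inv_add_inv_pos (hlx : 0 < lx) (hly : 0 < ly) (hρ : ρ ^ 2 < 1) :
    0 < (cubicR lx ly ρ).eval (1 + lx⁻¹ + ly⁻¹) := by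
  set N := 1 + lx⁻¹ + ly⁻¹
  have hN : 0 < N := by positivity
  have hx : lx ≤ lx * N - 1 := by
    have : lx * N - 1 = lx + lx / ly := by simp only [N]; field_simp; ring
    rw [this, le_add_iff_nonneg_right]
    positivity
  have hy : ly ≤ ly * N - 1 := by
    have : ly * N - 1 = ly + ly / lx := by simp only [N]; field_simp; ring
    rw [this, le_add_iff_nonneg_right]
    positivity
  have hprod : ρ ^ 2 * lx * ly * N < (1 + N) * (1 - lx * N) * (1 - ly * N) :=
    calc ρ ^ 2 * lx * ly * N ≤ lx * ly * N := by nlinarith [mul_pos (mul_pos hlx hly) hN]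
      _ < (1 + N) * (lx * ly) := by nlinarith [mul_pos hlx hly]
      _ ≤ (1 + N) * ((lx * N - 1) * (ly * N - 1)) := by gcongr; linarith
      _ = (1 + N) * (1 - lx * N) * (1 - ly * N) := by ring
  rw [eval_eq]
  linarith

theorem roots_of_rho_ne_zero (hlx : 0 < lx) (hly : 0 < ly) (hρ : ρ ^ 2 < 1) (hρ0 : ρ ≠ 0) :
    ∃ a b c : ℝ, a < 0 ∧ 0 < b ∧ 0 < c ∧ (cubicR lx ly ρ).roots = {a, b, c} := by
  have hinv : 0 < lx⁻¹ := inv_pos.2 hlx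
  have hN : lx⁻¹ < 1 + lx⁻¹ + ly⁻¹ := by have := inv_pos.2 hly; linarith
  have hmid : (cubicR lx ly ρ).eval lx⁻¹ < 0 := by
    rw [eval_inv_left hlx.ne', neg_neg_iff_pos]
    positivity
  obtain ⟨a, ha, hra⟩ := exists_isRoot_mem_Ioo_of_mul_eval_neg (by norm_num : (-2 : ℝ) ≤ 0)
    (mul_neg_of_neg_of_pos (eval_neg_two_neg hlx hly hρ) (by rw [eval_zero]; exact one_pos))
  obtain ⟨b, hb, hrb⟩ := exists_isRoot_mem_Ioo_of_mul_eval_neg hinv.le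
    (mul_neg_of_pos_of_neg (by rw [eval_zero]; exact one_pos) hmid)
  obtain ⟨c, hc, hrc⟩ := exists_isRoot_mem_Ioo_of_mul_eval_neg hN.le
    (mul_neg_of_neg_of_pos hmid (eval_one_add_inv_add_inv_pos hlx hly hρ))
  refine ⟨a, b, c, ha.2, hb.1, hinv.trans hc.1, roots_eq_of_nodup_of_natDegree_le ne_zero ?_ ?_ ?_⟩
  · have hab : a < b := ha.2.trans hb.1
    have hbc : b < c := hb.2.trans hc.1
    simp [hab.ne, (hab.trans hbc).ne, hbc.ne]
  · simpa using ⟨hra, hrb, hrc⟩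
  · simp [natDegree_eq hlx.ne' hly.ne']

end cubicR

/-- For `λx, λy > 0` and `ρ ∈ (−1,1)`, the cubic polynomial
`R_{(λx,λy,ρ)}(X) = 1 + (1 − ρ²·λx·λy − λx − λy)·X + (λx·λy − λx − λy)·X² + λx·λy·X³`
has exactly two strictly positive real roots counted with multiplicity. -/
theorem cubic_R_has_two_positive_roots (lx ly ρ : ℝ) (hlx : 0 < lx) (hly : 0 < ly)
    (hρ : ρ ∈ Set.Ioo (-1 : ℝ) 1) :
    (((C 1 + C (1 - ρ ^ 2 * lx * ly - lx - ly) * X + C (lx * ly - lx - ly) * X ^ 2 +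
        C (lx * ly) * X ^ 3 : ℝ[X]).roots).filter (fun x => 0 < x)).card = 2 := by
  change ((cubicR lx ly ρ).roots.filter (fun x => 0 < x)).card = 2
  rcases eq_or_ne ρ 0 with rfl | hρ0
  · rw [cubicR.roots_of_rho_eq_zero hlx.ne' hly.ne']
    exact Multiset.card_filter_pos_triple (by norm_num) (inv_pos.2 hlx) (inv_pos.2 hly)
  · have hρsq : ρ ^ 2 < 1 := sq_lt_one_iff_abs_lt_one ρ |>.2 (abs_lt.2 hρ)
    obtain ⟨a, b, c, ha, hb, hc, hroots⟩ := cubicR.roots_of_rho_ne_zero hlx hly hρsq hρ0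
    rw [hroots]
    exact Multiset.card_filter_pos_triple ha.le hb hc
end

section
/- Let λx, λy > 0. For s ∈ [0,1), let r⁻(s) ≤ r⁺(s) denote the two strictly positive real roots (with multiplicity) of the cubic R(X) = 1 + (1 − s·λx·λy − λx − λy)·X + (λx·λy − λx − λy)·X² + λx·λy·X³ (i.e. R_{(λx,λy,ρ)} with s = ρ²). Then s ↦ r⁻(s) is strictly decreasing and s ↦ r⁺(s) is strictly increasing on [0,1): for all 0 ≤ s₁ < s₂ < 1 one has r⁻(s₂) < r⁻(s₁) and r⁺(s₁) < r⁺(s₂). -/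
open Polynomial

/-- The cubic `R(X) = 1 + (1 − s·λx·λy − λx − λy)·X + (λx·λy − λx − λy)·X² + λx·λy·X³`
(i.e. `R_{(λx,λy,ρ)}` with `s = ρ²`), as a polynomial over ℝ. -/
noncomputable def Rpoly (lx ly s : ℝ) : ℝ[X] :=
  C 1 + C (1 - s * lx * ly - lx - ly) * X + C (lx * ly - lx - ly) * X ^ 2 + C (lx * ly) * X ^ 3


lemma Rpoly_eval (lx ly s x : ℝ) :
    (Rpoly lx ly s).eval x =
      1 + (1 - s * lx * ly - lx - ly) * x + (lx * ly - lx - ly) * x ^ 2 + lx * ly * x ^ 3 := by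
  simp [Rpoly]

lemma Rpoly_natDegree (lx ly s : ℝ) (h : lx * ly ≠ 0) : (Rpoly lx ly s).natDegree = 3 := by
  unfold Rpoly
  compute_degree!
  exact ⟨left_ne_zero_of_mul h, right_ne_zero_of_mul h⟩

lemma Rpoly_ne_zero (lx ly s : ℝ) (h : lx * ly ≠ 0) : Rpoly lx ly s ≠ 0 := by
  intro hz
  have := Rpoly_natDegree lx ly s h
  rw [hz] at this
  simp at this

lemma Rpoly_leadingCoeff (lx ly s : ℝ) (h : lx * ly ≠ 0) :
    (Rpoly lx ly s).leadingCoeff = lx * ly := by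
  rw [leadingCoeff, Rpoly_natDegree lx ly s h]
  unfold Rpoly
  simp [coeff_X, coeff_one, coeff_X_pow, coeff_mul_X_pow']

lemma neg_eval_between (lx ly s : ℝ) (hlx : 0 < lx) (hly : 0 < ly) (hs1 : s < 1)
    (a b : ℝ) (hab : a ≤ b)
    (hfil : (Rpoly lx ly s).roots.filter (fun x => 0 < x) = {a, b})
    (x : ℝ) (hx : 0 < x) (hneg : (Rpoly lx ly s).eval x < 0) : a < x ∧ x < b := by
  have hL : 0 < lx * ly := mul_pos hlx hly
  have hL' : lx * ly ≠ 0 := ne_of_gt hL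
  set p := Rpoly lx ly s with hp
  have hp0 : p ≠ 0 := Rpoly_ne_zero lx ly s hL'
  have hdeg : p.natDegree = 3 := Rpoly_natDegree lx ly s hL'
  -- negative root via IVT
  have hm2 : p.eval (-2) < 0 := by
    rw [hp, Rpoly_eval]; nlinarith
  have h0 : p.eval 0 = 1 := by rw [hp, Rpoly_eval]; ring
  have hcont : ContinuousOn (fun y => p.eval y) (Set.Icc (-2 : ℝ) 0) :=
    (Polynomial.continuous p).continuousOn
  have hiv := intermediate_value_Ioo (by norm_num : (-2 : ℝ) ≤ 0) hcont
  have h0mem : (0 : ℝ) ∈ Set.Ioo (p.eval (-2)) (p.eval 0) := by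
    constructor <;> simp [hm2, h0]
  obtain ⟨r0, hr0mem, hr0⟩ := hiv h0mem
  have hr0neg : r0 < 0 := hr0mem.2
  have hr0root : r0 ∈ p.roots := by
    rw [mem_roots hp0]; exact hr0
  -- the multiset of roots
  have hsplit0 : p.roots.filter (fun x => 0 < x) + p.roots.filter (fun x => ¬ 0 < x) = p.roots :=
    Multiset.filter_add_not _ _
  have hr0N : r0 ∈ p.roots.filter (fun x => ¬ 0 < x) :=
    Multiset.mem_filter.2 ⟨hr0root, by push_neg; exact le_of_lt hr0neg⟩
  have hcard3 : Multiset.card p.roots ≤ 3 := by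
    have := p.card_roots'
    omega
  have hcardN : Multiset.card (p.roots.filter (fun x => ¬ 0 < x)) = 1 := by
    have h2 : Multiset.card (p.roots.filter (fun x => 0 < x)) = 2 := by
      rw [hfil]; rfl
    have hge : 1 ≤ Multiset.card (p.roots.filter (fun x => ¬ 0 < x)) :=
      Multiset.card_pos_iff_exists_mem.2 ⟨r0, hr0N⟩
    have := congrArg Multiset.card hsplit0
    rw [Multiset.card_add, h2] at this
    omega
  have hNsing : p.roots.filter (fun x => ¬ 0 < x) = {r0} := by
    obtain ⟨c, hc⟩ := Multiset.card_eq_one.1 hcardN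
    obtain rfl := Multiset.mem_singleton.1 (hc ▸ hr0N)
    exact hc
  have hroots : p.roots = {a, b, r0} := by
    rw [← hsplit0, hfil, hNsing]; rfl
  have hcardeq : Multiset.card p.roots = p.natDegree := by
    rw [hroots, hdeg]; rfl
  have hsplits : Splits p := splits_iff_card_roots.2 hcardeq
  have hfact := hsplits.eq_prod_roots
  rw [hroots, Rpoly_leadingCoeff lx ly s hL'] at hfact
  have hevalx : p.eval x = lx * ly * ((x - a) * ((x - b) * ((x - r0) * 1))) := by
    conv_lhs => rw [hfact]
    simp [Multiset.insert_eq_cons]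
  rw [hevalx] at hneg
  have hxr0 : 0 < x - r0 := by linarith
  have hkey : (x - a) * (x - b) < 0 := by
    by_contra h
    push_neg at h
    nlinarith [mul_nonneg (mul_pos hL hxr0).le h]
  constructor
  · nlinarith
  · nlinarith

/-- Monotonicity of the two positive roots of `R` in `s = ρ²`: the smaller root `r⁻` is
strictly decreasing and the larger root `r⁺` is strictly increasing on `[0,1)`. -/
theorem positive_roots_monotone_in_correlation (lx ly : ℝ) (hlx : 0 < lx) (hly : 0 < ly)
    (rm rp : ℝ → ℝ)
    (hroots : ∀ s ∈ Set.Ico (0 : ℝ) 1,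
      0 < rm s ∧ rm s ≤ rp s ∧
        ((Rpoly lx ly s).roots.filter (fun x => 0 < x)) = {rm s, rp s}) :
    ∀ s₁ s₂ : ℝ, 0 ≤ s₁ → s₁ < s₂ → s₂ < 1 → rm s₂ < rm s₁ ∧ rp s₁ < rp s₂ := by
  intro s₁ s₂ h0 h12 h21
  have hL : 0 < lx * ly := mul_pos hlx hly
  obtain ⟨hm1, hmp1, hfil1⟩ := hroots s₁ ⟨h0, h12.trans h21⟩
  obtain ⟨hm2, hmp2, hfil2⟩ := hroots s₂ ⟨h0.trans h12.le, h21⟩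
  have hp1 : Rpoly lx ly s₁ ≠ 0 := Rpoly_ne_zero lx ly s₁ (ne_of_gt hL)
  have hiroot : ∀ x ∈ ({rm s₁, rp s₁} : Multiset ℝ), (Rpoly lx ly s₁).eval x = 0 := by
    intro x hxm
    rw [← hfil1] at hxm
    exact ((mem_roots hp1).1 (Multiset.mem_of_mem_filter hxm))
  have hrel : ∀ x : ℝ, (Rpoly lx ly s₂).eval x
      = (Rpoly lx ly s₁).eval x - (s₂ - s₁) * (lx * ly) * x := by
    intro x; rw [Rpoly_eval, Rpoly_eval]; ring
  have hrp1 : 0 < rp s₁ := hm1.trans_le hmp1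
  have hneg1 : (Rpoly lx ly s₂).eval (rm s₁) < 0 := by
    rw [hrel, hiroot (rm s₁) (by simp)]
    have : 0 < (s₂ - s₁) * (lx * ly) * rm s₁ :=
      mul_pos (mul_pos (by linarith) hL) hm1
    linarith
  have hneg2 : (Rpoly lx ly s₂).eval (rp s₁) < 0 := by
    rw [hrel, hiroot (rp s₁) (by simp)]
    have : 0 < (s₂ - s₁) * (lx * ly) * rp s₁ :=
      mul_pos (mul_pos (by linarith) hL) hrp1
    linarith
  have h1 := neg_eval_between lx ly s₂ hlx hly h21 (rm s₂) (rp s₂) hmp2 hfil2 (rm s₁) hm1 hneg1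
  have h2 := neg_eval_between lx ly s₂ hlx hly h21 (rm s₂) (rp s₂) hmp2 hfil2 (rp s₁) hrp1 hneg2
  exact ⟨h1.1, h2.2⟩
end

section
/- Let λx, λy > 0 and ρ ∈ (−1,1). Then all three roots of the cubic polynomial R_{(λx,λy,ρ)}(X) = 1 + (1 − ρ²·λx·λy − λx − λy)·X + (λx·λy − λx − λy)·X² + λx·λy·X³ are real; equivalently, R_{(λx,λy,ρ)} splits over ℝ (its multiset of real roots counted with multiplicity has cardinality 3, and its discriminant is nonnegative). -/
open Polynomial

set_option maxHeartbeats 1000000 in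
/-- For `λx, λy > 0` and `ρ ∈ (−1,1)`, all three roots of the cubic
`R_{(λx,λy,ρ)}(X) = 1 + (1 − ρ²·λx·λy − λx − λy)·X + (λx·λy − λx − λy)·X² + λx·λy·X³`
are real: it splits over ℝ, its multiset of real roots (with multiplicity) has
cardinality 3, and its discriminant is nonnegative. -/
theorem cubic_R_all_roots_real (lx ly ρ : ℝ) (hlx : 0 < lx) (hly : 0 < ly)
    (hρ : ρ ∈ Set.Ioo (-1 : ℝ) 1) :
    ((C 1 + C (1 - ρ ^ 2 * lx * ly - lx - ly) * X + C (lx * ly - lx - ly) * X ^ 2 +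
        C (lx * ly) * X ^ 3 : ℝ[X]).roots).card = 3 ∧
    Splits
      (C 1 + C (1 - ρ ^ 2 * lx * ly - lx - ly) * X + C (lx * ly - lx - ly) * X ^ 2 +
        C (lx * ly) * X ^ 3) ∧
    0 ≤ (Cubic.mk (lx * ly) (lx * ly - lx - ly) (1 - ρ ^ 2 * lx * ly - lx - ly) 1).discr := by
  set p : ℝ[X] := C 1 + C (1 - ρ ^ 2 * lx * ly - lx - ly) * X + C (lx * ly - lx - ly) * X ^ 2 +
      C (lx * ly) * X ^ 3 with hp
  have hll : (0:ℝ) < lx * ly := mul_pos hlx hly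
  have hlne : lx * ly ≠ 0 := ne_of_gt hll
  have hdeg : p.natDegree = 3 := by
    rw [hp]; compute_degree!
    exact ⟨hlx.ne', hly.ne'⟩
  have hpne : p ≠ 0 := fun h => by simp [h] at hdeg
  have heval : ∀ t : ℝ, p.eval t = (t + 1) * (lx * t - 1) * (ly * t - 1) - ρ^2 * lx * ly * t := by
    intro t; simp [hp]; ring
  -- main step: card of roots = 3
  have hcard : p.roots.card = 3 := by
    rcases eq_or_ne ρ 0 with hr0 | hr0
    · -- p factors explicitly
      have hfac : p = C (lx * ly) * ((X - C (-1)) * (X - C lx⁻¹) * (X - C ly⁻¹)) := by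
        apply Polynomial.funext
        intro t
        rw [heval t, hr0]
        simp [eval_mul, eval_sub]
        field_simp
      rw [hfac, roots_C_mul _ hlne, roots_mul, roots_mul, roots_X_sub_C, roots_X_sub_C,
        roots_X_sub_C]
      · simp
      · exact mul_ne_zero (X_sub_C_ne_zero _) (X_sub_C_ne_zero _)
      · exact mul_ne_zero (mul_ne_zero (X_sub_C_ne_zero _) (X_sub_C_ne_zero _))
          (X_sub_C_ne_zero _)
    · -- three distinct roots by IVT
      have hr2 : 0 < ρ ^ 2 := by positivity
      set m : ℝ := max lx ly with hm
      have hmpos : 0 < m := lt_of_lt_of_le hlx (le_max_left _ _)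
      set A : ℝ := -(2 + 2 * ρ ^ 2) with hA
      set E : ℝ := 2 + 2 / lx + 2 / ly with hE
      have h1 : ρ ^ 2 ≤ 1 := by nlinarith [hρ.1, hρ.2]
      have hAlt : A < -1 := by rw [hA]; nlinarith
      have hA0 : A < 0 := by linarith
      have hAval : p.eval A < 0 := by
        rw [heval]
        have hq : lx * ly * A ^ 2 ≤ (lx * A - 1) * (ly * A - 1) := by
          nlinarith [mul_nonneg (add_pos hlx hly).le (by linarith : (0:ℝ) ≤ -A)]
        have hc : (A + 1) * ((lx * A - 1) * (ly * A - 1)) ≤ (A + 1) * (lx * ly * A ^ 2) :=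
          mul_le_mul_of_nonpos_left hq (by linarith : A + 1 ≤ 0)
        have hfin : (A + 1) * (lx * ly * A ^ 2) - ρ ^ 2 * lx * ly * A < 0 := by
          rw [hA]
          nlinarith [mul_pos hll hr2, mul_pos (mul_pos hll hr2) hr2,
            mul_nonneg hll.le (sq_nonneg (ρ ^ 2)), hll]
        nlinarith [hc, hfin]
      have hB : (0:ℝ) < p.eval (-1) := by
        rw [heval]; nlinarith [mul_pos hll hr2]
      have hminv : p.eval m⁻¹ < 0 := by
        rw [heval]
        have hz : (lx * m⁻¹ - 1) * (ly * m⁻¹ - 1) = 0 := by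
          rcases max_cases lx ly with ⟨h1, _⟩ | ⟨h1, _⟩
          · rw [hm, h1]; field_simp; ring
          · rw [hm, h1]; field_simp; ring
        rw [mul_assoc, hz, mul_zero]
        have : 0 < ρ ^ 2 * lx * ly * m⁻¹ := by positivity
        linarith
      have hE0 : (0:ℝ) < E := by rw [hE]; positivity
      have hlxE : lx * E = 2 * lx + 2 + 2 * lx / ly := by rw [hE]; field_simp
      have hlyE : ly * E = 2 * ly + 2 + 2 * ly / lx := by rw [hE]; field_simp; ring
      have hu : 2 * lx + 1 ≤ lx * E - 1 := by
        rw [hlxE]; have : 0 < 2 * lx / ly := by positivity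
        linarith
      have hv : 2 * ly + 1 ≤ ly * E - 1 := by
        rw [hlyE]; have : 0 < 2 * ly / lx := by positivity
        linarith
      have hEval : 0 < p.eval E := by
        rw [heval]
        have t1 : (2 * lx + 1) * (2 * ly + 1) ≤ (lx * E - 1) * (ly * E - 1) :=
          mul_le_mul hu hv (by positivity) (by nlinarith)
        have w1 : E * ((2 * lx + 1) * (2 * ly + 1)) ≤ (E + 1) * ((lx * E - 1) * (ly * E - 1)) :=
          mul_le_mul (by linarith) t1 (by positivity) (by linarith)
        have hkey : ρ ^ 2 * lx * ly < (2 * lx + 1) * (2 * ly + 1) := by nlinarith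
        have w2 : ρ ^ 2 * lx * ly * E < E * ((2 * lx + 1) * (2 * ly + 1)) := by
          rw [mul_comm E _]; exact mul_lt_mul_of_pos_right hkey hE0
        have hassoc : (E + 1) * (lx * E - 1) * (ly * E - 1)
            = (E + 1) * ((lx * E - 1) * (ly * E - 1)) := by ring
        linarith [w1, w2, hassoc]
      have hcont : Continuous fun t : ℝ => p.eval t := p.continuous
      have hmE : m⁻¹ ≤ E := by
        have h1m : m⁻¹ ≤ lx⁻¹ := by
          apply inv_anti₀ hlx (le_max_left _ _)
        have h2 : lx⁻¹ ≤ 2 / lx := by rw [inv_eq_one_div]; gcongr; norm_num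
        have h3 : 0 < 2 / ly := by positivity
        rw [hE]; linarith
      obtain ⟨a, haI, ha0⟩ := intermediate_value_Ioo (le_of_lt hAlt) hcont.continuousOn
        (Set.mem_Ioo.mpr ⟨hAval, hB⟩)
      obtain ⟨b, hbI, hb0⟩ := intermediate_value_Ioo' (by linarith [inv_pos.mpr hmpos] : (-1:ℝ) ≤ m⁻¹)
        hcont.continuousOn (Set.mem_Ioo.mpr ⟨hminv, hB⟩)
      obtain ⟨c, hcI, hc0⟩ := intermediate_value_Ioo hmE hcont.continuousOn
        (Set.mem_Ioo.mpr ⟨hminv, hEval⟩)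
      have hab : a < b := lt_trans haI.2 hbI.1
      have hbc : b < c := lt_trans hbI.2 hcI.1
      have hsub : ({a, b, c} : Finset ℝ) ⊆ p.roots.toFinset := by
        intro x hx
        rw [Multiset.mem_toFinset, mem_roots hpne]
        simp only [Finset.mem_insert, Finset.mem_singleton] at hx
        rcases hx with rfl | rfl | rfl
        · exact ha0
        · exact hb0
        · exact hc0
      have hcard3 : ({a, b, c} : Finset ℝ).card = 3 :=
        Finset.card_eq_three.mpr ⟨a, b, c, ne_of_lt hab, ne_of_lt (lt_trans hab hbc),
          ne_of_lt hbc, rfl⟩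
      have h1' : 3 ≤ p.roots.toFinset.card := hcard3 ▸ Finset.card_le_card hsub
      have h2' : p.roots.toFinset.card ≤ Multiset.card p.roots := p.roots.toFinset_card_le
      have h3' : Multiset.card p.roots ≤ 3 := hdeg ▸ p.card_roots'
      omega
  refine ⟨hcard, ?_, ?_⟩
  · rw [Polynomial.splits_iff_card_roots, hcard, hdeg]
  · set P : Cubic ℝ := Cubic.mk (lx * ly) (lx * ly - lx - ly) (1 - ρ ^ 2 * lx * ly - lx - ly) 1
      with hP
    have htp : P.toPoly = p := by
      rw [hP, hp, Cubic.toPoly]; ring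
    have hmap : Cubic.map (RingHom.id ℝ) P = P := by
      simp [Cubic.map]
    obtain ⟨x, y, z, hxyz⟩ := Multiset.card_eq_three.mp hcard
    have h3 : (Cubic.map (RingHom.id ℝ) P).roots = {x, y, z} := by
      rw [hmap, Cubic.roots, htp, hxyz]
    have := Cubic.discr_eq_prod_three_roots (by rw [hP]; exact hlne) h3
    simp only [RingHom.id_apply] at this
    rw [this]
    positivity
end

section
/- (Woodbury identity for restricted resolvents.) Let A ∈ ℝ^{n×n} be symmetric, Q ∈ ℝ^{n×d}, C ∈ ℝ^{d×d} symmetric, and set A' = A + Q·C·Qᵀ. Let z ∈ ℝ be such that both zI − A and zI − A' are invertible, and define K = Qᵀ·(zI − A)⁻¹·Q and K' = Qᵀ·(zI − A')⁻¹·Q. Then I − K·C is invertible and K' = K + K·C·(I − K·C)⁻¹·K. -/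
open Matrix

/-!
Write `G = zI − A` and `H = zI − A' = G − QCQᵀ`. The resolvent identity
`H⁻¹ − G⁻¹ = G⁻¹(G − H)H⁻¹ = H⁻¹(G − H)G⁻¹`, sandwiched between `Qᵀ` and `Q`, gives
`K' − K = KCK' = K'CK`. From these two relations alone, `1 + K'C` is a two-sided inverse
of `1 − KC`, and `K' = K + K'CK = (1 − KC)⁻¹K = K + KC(1 − KC)⁻¹K`.
-/

section

variable {m n α : Type*} [Fintype m] [Fintype n] [DecidableEq n] [CommRing α]

theorem Matrix.mul_inv_mul_sub_mul_inv_mul {G H : Matrix n n α} {P : Matrix m n α}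
    {Q : Matrix n m α} {C : Matrix m m α} (hG : IsUnit G) (hH : IsUnit H)
    (hGH : G - H = Q * C * P) :
    P * H⁻¹ * Q - P * G⁻¹ * Q = (P * G⁻¹ * Q) * C * (P * H⁻¹ * Q) := by
  have hresolvent : H⁻¹ - G⁻¹ = G⁻¹ * (Q * C * P) * H⁻¹ := by
    rw [← hGH, ← neg_sub G⁻¹ H⁻¹, inv_sub_inv (iff_of_true hG hH)]
    noncomm_ring
  calc P * H⁻¹ * Q - P * G⁻¹ * Q
        = P * (H⁻¹ - G⁻¹) * Q := by rw [Matrix.mul_sub, Matrix.sub_mul]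
    _ = (P * G⁻¹ * Q) * C * (P * H⁻¹ * Q) := by rw [hresolvent]; simp only [Matrix.mul_assoc]

variable [DecidableEq m] {K K' C : Matrix m m α}

theorem Matrix.one_sub_mul_mul_one_add_mul_eq_one (h : K' - K = K * C * K') :
    (1 - K * C) * (1 + K' * C) = 1 :=
  calc (1 - K * C) * (1 + K' * C) = 1 + (K' - K - K * C * K') * C := by noncomm_ring
    _ = 1 := by rw [h, sub_self, zero_mul, add_zero]

theorem Matrix.add_mul_mul_inv_one_sub_mul_mul_eq (h : K' - K = K * C * K')
    (h' : K' - K = K' * C * K) :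
    K + K * C * (1 - K * C)⁻¹ * K = K' := by
  rw [inv_eq_right_inv (one_sub_mul_mul_one_add_mul_eq_one h)]
  calc K + K * C * (1 + K' * C) * K = K + K * C * (K + K' * C * K) := by noncomm_ring
    _ = K + K * C * K' := by rw [← h', add_sub_cancel]
    _ = K' := by rw [← h, add_sub_cancel]

end

theorem woodbury_restricted_resolvent_identity_general {n d : ℕ}
    (A : Matrix (Fin n) (Fin n) ℝ)
    (Q : Matrix (Fin n) (Fin d) ℝ)
    (C : Matrix (Fin d) (Fin d) ℝ)
    (z : ℝ)
    (hG : IsUnit (z • (1 : Matrix (Fin n) (Fin n) ℝ) - A))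
    (hG' : IsUnit (z • (1 : Matrix (Fin n) (Fin n) ℝ) - (A + Q * C * Qᵀ))) :
    IsUnit ((1 : Matrix (Fin d) (Fin d) ℝ) -
        (Qᵀ * (z • (1 : Matrix (Fin n) (Fin n) ℝ) - A)⁻¹ * Q) * C) ∧
    Qᵀ * (z • (1 : Matrix (Fin n) (Fin n) ℝ) - (A + Q * C * Qᵀ))⁻¹ * Q =
      Qᵀ * (z • (1 : Matrix (Fin n) (Fin n) ℝ) - A)⁻¹ * Q +
        (Qᵀ * (z • (1 : Matrix (Fin n) (Fin n) ℝ) - A)⁻¹ * Q) * C *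
          ((1 : Matrix (Fin d) (Fin d) ℝ) -
            (Qᵀ * (z • (1 : Matrix (Fin n) (Fin n) ℝ) - A)⁻¹ * Q) * C)⁻¹ *
          (Qᵀ * (z • (1 : Matrix (Fin n) (Fin n) ℝ) - A)⁻¹ * Q) := by
  set G := z • (1 : Matrix (Fin n) (Fin n) ℝ) - A
  set H := z • (1 : Matrix (Fin n) (Fin n) ℝ) - (A + Q * C * Qᵀ)
  set K := Qᵀ * G⁻¹ * Q
  set K' := Qᵀ * H⁻¹ * Q
  have hGH : G - H = Q * C * Qᵀ := by simp only [G, H]; abel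
  have hHG : H - G = Q * (-C) * Qᵀ := by rw [← neg_sub, hGH, Matrix.mul_neg, Matrix.neg_mul]
  have hKK' : K' - K = K * C * K' := mul_inv_mul_sub_mul_inv_mul hG hG' hGH
  have hK'K : K' - K = K' * C * K := by
    rw [← neg_sub, mul_inv_mul_sub_mul_inv_mul hG' hG hHG, Matrix.mul_neg, Matrix.neg_mul,
      neg_neg]
  exact ⟨(isUnit_iff_isUnit_det _).2
      (isUnit_det_of_right_inverse (one_sub_mul_mul_one_add_mul_eq_one hKK')),
    (add_mul_mul_inv_one_sub_mul_mul_eq hKK' hK'K).symm⟩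

/-- Woodbury identity for restricted resolvents: with `A` symmetric,
`A' = A + Q·C·Qᵀ`, `K = Qᵀ·(zI − A)⁻¹·Q` and `K' = Qᵀ·(zI − A')⁻¹·Q`,
the matrix `I − K·C` is invertible and `K' = K + K·C·(I − K·C)⁻¹·K`. -/
theorem woodbury_restricted_resolvent_identity {n d : ℕ}
    (A : Matrix (Fin n) (Fin n) ℝ) (hA : A.IsSymm)
    (Q : Matrix (Fin n) (Fin d) ℝ)
    (C : Matrix (Fin d) (Fin d) ℝ) (hC : C.IsSymm)
    (z : ℝ)
    (hG : IsUnit (z • (1 : Matrix (Fin n) (Fin n) ℝ) - A))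
    (hG' : IsUnit (z • (1 : Matrix (Fin n) (Fin n) ℝ) - (A + Q * C * Qᵀ))) :
    IsUnit ((1 : Matrix (Fin d) (Fin d) ℝ) -
        (Qᵀ * (z • (1 : Matrix (Fin n) (Fin n) ℝ) - A)⁻¹ * Q) * C) ∧
    Qᵀ * (z • (1 : Matrix (Fin n) (Fin n) ℝ) - (A + Q * C * Qᵀ))⁻¹ * Q =
      Qᵀ * (z • (1 : Matrix (Fin n) (Fin n) ℝ) - A)⁻¹ * Q +
        (Qᵀ * (z • (1 : Matrix (Fin n) (Fin n) ℝ) - A)⁻¹ * Q) * C *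
          ((1 : Matrix (Fin d) (Fin d) ℝ) -
            (Qᵀ * (z • (1 : Matrix (Fin n) (Fin n) ℝ) - A)⁻¹ * Q) * C)⁻¹ *
          (Qᵀ * (z • (1 : Matrix (Fin n) (Fin n) ℝ) - A)⁻¹ * Q) :=
  woodbury_restricted_resolvent_identity_general A Q C z hG hG'
end

section
/- (Matrix determinant lemma for chiral matrices.) Let B ∈ ℝ^{n×m}, L ∈ ℝ^{n×d}, R ∈ ℝ^{m×d}, and let C ∈ ℝ^{d×d} be invertible. Let z ∈ ℝ be such that z²·I_n − B·Bᵀ and z²·I_m − Bᵀ·B are invertible, and set Γ = (z²·I_n − B·Bᵀ)⁻¹, Γ̌ = (z²·I_m − Bᵀ·B)⁻¹. Define the 2d×2d matrix Υ(z) = [[z·Lᵀ·Γ·L, Lᵀ·Γ·B·R],[Rᵀ·Bᵀ·Γ·L, z·Rᵀ·Γ̌·R]] − η((Cᵀ)⁻¹). Then det(z·I_{n+m} − η(B + L·C·Rᵀ)) = (−1)^d · det(C)² · det(z·I_{n+m} − η(B)) · det(Υ(z)). -/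
open Matrix

/-- The hermitian embedding `η(A) = [[0, A],[Aᵀ, 0]]`. -/
def chiral {n m : ℕ} (A : Matrix (Fin n) (Fin m) ℝ) :
    Matrix (Fin n ⊕ Fin m) (Fin n ⊕ Fin m) ℝ :=
  Matrix.fromBlocks 0 A Aᵀ 0

lemma fromBlocks_sub' {n m : ℕ} (A A' : Matrix (Fin n) (Fin n) ℝ) (B B' : Matrix (Fin n) (Fin m) ℝ)
    (C C' : Matrix (Fin m) (Fin n) ℝ) (D D' : Matrix (Fin m) (Fin m) ℝ) :
    fromBlocks A B C D - fromBlocks A' B' C' D' =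
      fromBlocks (A - A') (B - B') (C - C') (D - D') := by
  simp [sub_eq_add_neg, Matrix.fromBlocks_neg, Matrix.fromBlocks_add]

lemma det_swapBlocks (d : ℕ) :
    (fromBlocks 0 (1 : Matrix (Fin d) (Fin d) ℝ) 1 0).det = (-1 : ℝ)^d := by
  classical
  let e : Fin d ⊕ Fin d ≃ Fin 2 × Fin d :=
    { toFun := Sum.elim (fun i => (0, i)) (fun i => (1, i))
      invFun := fun p => if p.1 = 0 then Sum.inl p.2 else Sum.inr p.2
      left_inv := by rintro (i | i) <;> simp
      right_inv := by rintro ⟨a, i⟩; fin_cases a <;> simp }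
  have he : (fromBlocks 0 (1 : Matrix (Fin d) (Fin d) ℝ) 1 0) =
      (blockDiagonal (fun _ : Fin d => !![0,1;1,0])).submatrix e e := by
    ext x y
    rcases x with i | i <;> rcases y with j | j <;>
      simp [e, blockDiagonal, fromBlocks, Matrix.one_apply, eq_comm]
  rw [he, Matrix.det_submatrix_equiv_self, Matrix.det_blockDiagonal]
  simp [Matrix.det_fin_two_of]

/-- Matrix determinant lemma for chiral matrices:
`det(zI − η(B + LCRᵀ)) = (−1)^d·det(C)²·det(zI − η(B))·det(Υ(z))` where
`Υ(z) = [[z·LᵀΓL, LᵀΓBR],[RᵀBᵀΓL, z·RᵀΓ̌R]] − [[0,(Cᵀ)⁻¹],[C⁻¹,0]]`,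
`Γ = (z²I − BBᵀ)⁻¹` and `Γ̌ = (z²I − BᵀB)⁻¹`. -/
theorem chiral_matrix_determinant_lemma {n m d : ℕ}
    (B : Matrix (Fin n) (Fin m) ℝ)
    (L : Matrix (Fin n) (Fin d) ℝ) (R : Matrix (Fin m) (Fin d) ℝ)
    (C : Matrix (Fin d) (Fin d) ℝ) (hC : IsUnit C)
    (z : ℝ)
    (h1 : IsUnit (z ^ 2 • (1 : Matrix (Fin n) (Fin n) ℝ) - B * Bᵀ))
    (h2 : IsUnit (z ^ 2 • (1 : Matrix (Fin m) (Fin m) ℝ) - Bᵀ * B)) :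
    (z • (1 : Matrix (Fin n ⊕ Fin m) (Fin n ⊕ Fin m) ℝ) -
        chiral (B + L * C * Rᵀ)).det =
      (-1 : ℝ) ^ d * C.det ^ 2 *
        (z • (1 : Matrix (Fin n ⊕ Fin m) (Fin n ⊕ Fin m) ℝ) - chiral B).det *
        (Matrix.fromBlocks
            (z • (Lᵀ * (z ^ 2 • (1 : Matrix (Fin n) (Fin n) ℝ) - B * Bᵀ)⁻¹ * L))
            (Lᵀ * (z ^ 2 • (1 : Matrix (Fin n) (Fin n) ℝ) - B * Bᵀ)⁻¹ * B * R)
            (Rᵀ * Bᵀ * (z ^ 2 • (1 : Matrix (Fin n) (Fin n) ℝ) - B * Bᵀ)⁻¹ * L)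
            (z • (Rᵀ * (z ^ 2 • (1 : Matrix (Fin m) (Fin m) ℝ) - Bᵀ * B)⁻¹ * R)) -
          Matrix.fromBlocks 0 (Cᵀ)⁻¹ C⁻¹ 0).det := by
  classical
  set A1 : Matrix (Fin n) (Fin n) ℝ := z ^ 2 • 1 - B * Bᵀ with hA1
  set A2 : Matrix (Fin m) (Fin m) ℝ := z ^ 2 • 1 - Bᵀ * B with hA2
  set G : Matrix (Fin n) (Fin n) ℝ := A1⁻¹ with hG
  set Gc : Matrix (Fin m) (Fin m) ℝ := A2⁻¹ with hGc
  have hd1 : IsUnit A1.det := (Matrix.isUnit_iff_isUnit_det _).mp h1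
  have hd2 : IsUnit A2.det := (Matrix.isUnit_iff_isUnit_det _).mp h2
  have hA1G : A1 * G = 1 := Matrix.mul_nonsing_inv _ hd1
  have hGA1 : G * A1 = 1 := Matrix.nonsing_inv_mul _ hd1
  have hA2Gc : A2 * Gc = 1 := Matrix.mul_nonsing_inv _ hd2
  have hkey : A1 * B = B * A2 := by
    rw [hA1, hA2, Matrix.sub_mul, Matrix.mul_sub, Matrix.smul_mul, Matrix.mul_smul,
      Matrix.one_mul, Matrix.mul_one, Matrix.mul_assoc]
  have hcomm : G * B = B * Gc := by
    calc G * B = G * B * (A2 * Gc) := by rw [hA2Gc, Matrix.mul_one]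
    _ = G * (B * A2) * Gc := by simp only [Matrix.mul_assoc]
    _ = G * (A1 * B) * Gc := by rw [hkey]
    _ = (G * A1) * (B * Gc) := by simp only [Matrix.mul_assoc]
    _ = B * Gc := by rw [hGA1, Matrix.one_mul]
  set N : Matrix (Fin n ⊕ Fin m) (Fin n ⊕ Fin m) ℝ :=
    fromBlocks (z • G) (G * B) (Bᵀ * G) (z • Gc) with hN
  set M : Matrix (Fin n ⊕ Fin m) (Fin n ⊕ Fin m) ℝ := z • 1 - chiral B with hM
  have hMblocks : M = fromBlocks (z • 1) (-B) (-Bᵀ) (z • 1) := by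
    rw [hM, chiral, ← Matrix.fromBlocks_one, Matrix.fromBlocks_smul, fromBlocks_sub']
    simp
  have hMN : M * N = 1 := by
    rw [hMblocks, hN, Matrix.fromBlocks_multiply]
    have e11 : (z • (1 : Matrix (Fin n) (Fin n) ℝ)) * (z • G) + (-B) * (Bᵀ * G) = 1 := by
      have h11 : (z • (1 : Matrix (Fin n) (Fin n) ℝ)) * (z • G) =
          (z ^ 2 • (1 : Matrix (Fin n) (Fin n) ℝ)) * G := by
        rw [Matrix.smul_mul, Matrix.smul_mul, Matrix.one_mul, Matrix.one_mul, smul_smul, sq]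
      rw [h11, Matrix.neg_mul, ← Matrix.mul_assoc, ← sub_eq_add_neg, ← Matrix.sub_mul,
        ← hA1, hA1G]
    have e12 : (z • (1 : Matrix (Fin n) (Fin n) ℝ)) * (G * B) + (-B) * (z • Gc) = 0 := by
      rw [Matrix.smul_mul, Matrix.one_mul, hcomm, Matrix.neg_mul, Matrix.mul_smul]
      simp
    have e21 : (-Bᵀ) * (z • G) + (z • (1 : Matrix (Fin m) (Fin m) ℝ)) * (Bᵀ * G) = 0 := by
      rw [Matrix.neg_mul, Matrix.mul_smul, Matrix.smul_mul, Matrix.one_mul]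
      simp
    have e22 : (-Bᵀ) * (G * B) + (z • (1 : Matrix (Fin m) (Fin m) ℝ)) * (z • Gc) = 1 := by
      have h22 : (z • (1 : Matrix (Fin m) (Fin m) ℝ)) * (z • Gc) =
          (z ^ 2 • (1 : Matrix (Fin m) (Fin m) ℝ)) * Gc := by
        rw [Matrix.smul_mul, Matrix.smul_mul, Matrix.one_mul, Matrix.one_mul, smul_smul, sq]
      rw [h22, hcomm, Matrix.neg_mul, ← Matrix.mul_assoc, add_comm, ← sub_eq_add_neg,
        ← Matrix.sub_mul, ← hA2, hA2Gc]
    rw [e11, e12, e21, e22, Matrix.fromBlocks_one]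
  have hMdet : IsUnit M.det := by
    have : M.det * N.det = 1 := by rw [← Matrix.det_mul, hMN, Matrix.det_one]
    exact IsUnit.of_mul_eq_one _ this
  -- the dressing matrices
  set U : Matrix (Fin n ⊕ Fin m) (Fin d ⊕ Fin d) ℝ := fromBlocks L 0 0 R with hU
  set K : Matrix (Fin d ⊕ Fin d) (Fin d ⊕ Fin d) ℝ := fromBlocks 0 C Cᵀ 0 with hK
  set K' : Matrix (Fin d ⊕ Fin d) (Fin d ⊕ Fin d) ℝ := fromBlocks 0 (Cᵀ)⁻¹ C⁻¹ 0 with hK'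
  have hUt : Uᵀ = fromBlocks Lᵀ 0 0 Rᵀ := by
    rw [hU, Matrix.fromBlocks_transpose, Matrix.transpose_zero, Matrix.transpose_zero]
  have hCd : IsUnit C.det := (Matrix.isUnit_iff_isUnit_det _).mp hC
  have hCtd : IsUnit Cᵀ.det := by rwa [Matrix.det_transpose]
  have hKK' : K * K' = 1 := by
    rw [hK, hK', Matrix.fromBlocks_multiply]
    simp [Matrix.mul_nonsing_inv _ hCd, Matrix.mul_nonsing_inv _ hCtd,
      ← Matrix.fromBlocks_one]
  have hUKU : U * K * Uᵀ = chiral (L * C * Rᵀ) := by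
    rw [hU, hK, hUt, chiral, Matrix.fromBlocks_multiply, Matrix.fromBlocks_multiply]
    simp [Matrix.mul_assoc, Matrix.transpose_mul]
  have hsplit : z • (1 : Matrix (Fin n ⊕ Fin m) (Fin n ⊕ Fin m) ℝ) -
      chiral (B + L * C * Rᵀ) = M - U * K * Uᵀ := by
    rw [hUKU, hM]
    have : chiral (B + L * C * Rᵀ) = chiral B + chiral (L * C * Rᵀ) := by
      rw [chiral, chiral, chiral, Matrix.transpose_add, Matrix.fromBlocks_add]
      simp
    rw [this, sub_add_eq_sub_sub]
  have hfactor : M - U * K * Uᵀ = M * (1 - (N * U) * (K * Uᵀ)) := by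
    rw [Matrix.mul_sub, Matrix.mul_one]
    congr 1
    symm
    calc M * ((N * U) * (K * Uᵀ)) = (M * N) * (U * (K * Uᵀ)) := by
          simp only [Matrix.mul_assoc]
      _ = U * K * Uᵀ := by rw [hMN, Matrix.one_mul, Matrix.mul_assoc]
  have hKfactor : 1 - (K * Uᵀ) * (N * U) = K * (K' - Uᵀ * N * U) := by
    rw [Matrix.mul_sub, hKK']
    congr 1
    simp only [Matrix.mul_assoc]
  have hdetK : K.det = (-1 : ℝ) ^ d * C.det ^ 2 := by
    have hfac : K = fromBlocks C 0 0 Cᵀ * fromBlocks 0 1 1 0 := by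
      rw [hK, Matrix.fromBlocks_multiply]
      simp
    rw [hfac, Matrix.det_mul, Matrix.det_fromBlocks_zero₂₁, det_swapBlocks,
      Matrix.det_transpose, sq]
    ring
  have hX : Uᵀ * N * U = fromBlocks (z • (Lᵀ * G * L)) (Lᵀ * G * B * R)
      (Rᵀ * Bᵀ * G * L) (z • (Rᵀ * Gc * R)) := by
    rw [hUt, hN, Matrix.fromBlocks_multiply, Matrix.fromBlocks_multiply]
    simp [Matrix.mul_assoc, Matrix.mul_smul, Matrix.smul_mul]
  have hflip : (K' - Uᵀ * N * U).det = (Uᵀ * N * U - K').det := by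
    rw [← neg_sub, Matrix.det_neg]
    have : Fintype.card (Fin d ⊕ Fin d) = d + d := by simp
    rw [this, Even.neg_one_pow ⟨d, rfl⟩, one_mul]
  calc (z • (1 : Matrix (Fin n ⊕ Fin m) (Fin n ⊕ Fin m) ℝ) -
        chiral (B + L * C * Rᵀ)).det
      = (M * (1 - (N * U) * (K * Uᵀ))).det := by rw [hsplit, hfactor]
    _ = M.det * (1 - (N * U) * (K * Uᵀ)).det := Matrix.det_mul _ _
    _ = M.det * (1 - (K * Uᵀ) * (N * U)).det := by rw [Matrix.det_one_sub_mul_comm]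
    _ = M.det * (K.det * (K' - Uᵀ * N * U).det) := by rw [hKfactor, Matrix.det_mul]
    _ = M.det * (((-1 : ℝ) ^ d * C.det ^ 2) * (Uᵀ * N * U - K').det) := by
        rw [hdetK, hflip]
    _ = _ := by rw [hX]; ring
end

section
/- (Trace identity for the cross-covariance resolvent.) Let X ∈ ℝ^{n×dx}, Y ∈ ℝ^{n×dy}, S = Xᵀ·Y ∈ ℝ^{dx×dy}, Sx = X·Xᵀ ∈ ℝ^{n×n} and Sy = Y·Yᵀ ∈ ℝ^{n×n}. Let z ∈ ℝ be such that z²·I_{dx} − S·Sᵀ and z²·I_n − Sx^{1/2}·Sy·Sx^{1/2} are both invertible, where Sx^{1/2} is the positive semidefinite square root of Sx. Then Tr( X·(z²·I_{dx} − S·Sᵀ)⁻¹·Xᵀ ) = Tr( (z²·I_n − Sx^{1/2}·Sy·Sx^{1/2})⁻¹·Sx ). -/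
/-!
Both resolvents are intertwined with the resolvent of `C = z²I − Sx·Sy` by the push-through
identity `P (c − QP)⁻¹ = (c − PQ)⁻¹ P`: taking `P = X`, `Q = Xᵀ·Sy` gives `X (z² − SSᵀ)⁻¹ = C⁻¹ X`,
and taking `P = T`, `Q = T·Sy` gives `T (z² − T·Sy·T)⁻¹ = C⁻¹ T`. Hence both traces equal
`Tr(C⁻¹ T T)`, using `T T = Sx` and cyclicity of the trace; invertibility of `C` comes from
`det(c − MN) = det(c − NM)`.
-/

open Matrix

namespace Matrix

variable {m k R : Type*} [Fintype m] [DecidableEq m] [Fintype k] [DecidableEq k] [CommRing R]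

theorem det_smul_one_sub_mul_comm (c : R) (M N : Matrix m m R) :
    (c • 1 - M * N).det = (c • 1 - N * M).det := by
  have h : ∀ P : Matrix m m R, (c • 1 - P).det = P.charpoly.eval c := fun P => by
    rw [eval_charpoly, scalar_apply, smul_one_eq_diagonal]
  rw [h, h, charpoly_mul_comm]

theorem mul_inv_eq_inv_mul_of_mul_eq_mul {A : Matrix k k R} {B : Matrix m m R} {P : Matrix m k R}
    (hA : IsUnit A) (hB : IsUnit B) (h : P * A = B * P) : P * A⁻¹ = B⁻¹ * P := by
  rw [isUnit_iff_isUnit_det] at hA hB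
  calc P * A⁻¹ = B⁻¹ * (B * P) * A⁻¹ := by
        rw [← Matrix.mul_assoc, nonsing_inv_mul _ hB, Matrix.one_mul]
    _ = B⁻¹ * P := by
        rw [← h, Matrix.mul_assoc, Matrix.mul_assoc, mul_nonsing_inv _ hA, Matrix.mul_one]

theorem mul_smul_one_sub_mul (c : R) (P : Matrix m k R) (Q : Matrix k m R) :
    P * (c • 1 - Q * P) = (c • 1 - P * Q) * P := by
  simp only [Matrix.mul_sub, Matrix.sub_mul, Matrix.mul_smul, Matrix.smul_mul, Matrix.mul_one,
    Matrix.one_mul, Matrix.mul_assoc]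

theorem mul_inv_smul_one_sub_mul (c : R) (P : Matrix m k R) (Q : Matrix k m R)
    (h₁ : IsUnit (c • 1 - Q * P)) (h₂ : IsUnit (c • 1 - P * Q)) :
    P * (c • 1 - Q * P)⁻¹ = (c • 1 - P * Q)⁻¹ * P :=
  mul_inv_eq_inv_mul_of_mul_eq_mul h₁ h₂ (mul_smul_one_sub_mul c P Q)

end Matrix

theorem trace_identity_cross_covariance_resolvent_general {n dx dy : ℕ}
    (X : Matrix (Fin n) (Fin dx) ℝ) (Y : Matrix (Fin n) (Fin dy) ℝ)
    (T : Matrix (Fin n) (Fin n) ℝ) (hTsq : T * T = X * Xᵀ)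
    (z : ℝ)
    (h1 : IsUnit (z ^ 2 • (1 : Matrix (Fin dx) (Fin dx) ℝ) - (Xᵀ * Y) * (Xᵀ * Y)ᵀ))
    (h2 : IsUnit (z ^ 2 • (1 : Matrix (Fin n) (Fin n) ℝ) - T * (Y * Yᵀ) * T)) :
    Matrix.trace (X * (z ^ 2 • (1 : Matrix (Fin dx) (Fin dx) ℝ) -
        (Xᵀ * Y) * (Xᵀ * Y)ᵀ)⁻¹ * Xᵀ) =
      Matrix.trace ((z ^ 2 • (1 : Matrix (Fin n) (Fin n) ℝ) -
        T * (Y * Yᵀ) * T)⁻¹ * (X * Xᵀ)) := by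
  set C := z ^ 2 • (1 : Matrix (Fin n) (Fin n) ℝ) - T * (T * (Y * Yᵀ))
  have hS : (Xᵀ * Y) * (Xᵀ * Y)ᵀ = Xᵀ * (Y * Yᵀ) * X := by
    simp only [transpose_mul, transpose_transpose, Matrix.mul_assoc]
  have hC : IsUnit C := by
    rwa [isUnit_iff_isUnit_det, det_smul_one_sub_mul_comm, ← isUnit_iff_isUnit_det]
  have hXC : X * (Xᵀ * (Y * Yᵀ)) = T * (T * (Y * Yᵀ)) := by
    rw [← Matrix.mul_assoc X, ← hTsq, Matrix.mul_assoc]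
  have hX : X * (z ^ 2 • 1 - (Xᵀ * Y) * (Xᵀ * Y)ᵀ)⁻¹ = C⁻¹ * X := by
    rw [hS] at h1 ⊢
    rw [mul_inv_smul_one_sub_mul _ _ _ h1 (by rwa [hXC]), hXC]
  have hT : T * (z ^ 2 • 1 - T * (Y * Yᵀ) * T)⁻¹ = C⁻¹ * T :=
    mul_inv_smul_one_sub_mul _ T (T * (Y * Yᵀ)) h2 hC
  calc trace (X * (z ^ 2 • 1 - (Xᵀ * Y) * (Xᵀ * Y)ᵀ)⁻¹ * Xᵀ) = trace (C⁻¹ * T * T) := by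
        rw [hX, Matrix.mul_assoc, ← hTsq, Matrix.mul_assoc]
    _ = trace (T * (z ^ 2 • 1 - T * (Y * Yᵀ) * T)⁻¹ * T) := by rw [hT]
    _ = trace ((z ^ 2 • 1 - T * (Y * Yᵀ) * T)⁻¹ * (X * Xᵀ)) := by
        rw [Matrix.mul_assoc, trace_mul_comm, Matrix.mul_assoc, hTsq]

/-- Trace identity for the cross-covariance resolvent: with `S = XᵀY`, `Sx = XXᵀ`,
`Sy = YYᵀ` and `T = Sx^{1/2}` the psd square root of `Sx`,
`Tr(X·(z²I − SSᵀ)⁻¹·Xᵀ) = Tr((z²I − T·Sy·T)⁻¹·Sx)`. -/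
theorem trace_identity_cross_covariance_resolvent {n dx dy : ℕ}
    (X : Matrix (Fin n) (Fin dx) ℝ) (Y : Matrix (Fin n) (Fin dy) ℝ)
    (T : Matrix (Fin n) (Fin n) ℝ) (hT : T.PosSemidef) (hTsq : T * T = X * Xᵀ)
    (z : ℝ)
    (h1 : IsUnit (z ^ 2 • (1 : Matrix (Fin dx) (Fin dx) ℝ) - (Xᵀ * Y) * (Xᵀ * Y)ᵀ))
    (h2 : IsUnit (z ^ 2 • (1 : Matrix (Fin n) (Fin n) ℝ) - T * (Y * Yᵀ) * T)) :
    Matrix.trace (X * (z ^ 2 • (1 : Matrix (Fin dx) (Fin dx) ℝ) -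
        (Xᵀ * Y) * (Xᵀ * Y)ᵀ)⁻¹ * Xᵀ) =
      Matrix.trace ((z ^ 2 • (1 : Matrix (Fin n) (Fin n) ℝ) -
        T * (Y * Yᵀ) * T)⁻¹ * (X * Xᵀ)) :=
  trace_identity_cross_covariance_resolvent_general X Y T hTsq z h1 h2
end

section
/- (Overlap of a singular vector via a resolvent limit.) Let M ∈ ℝ^{p×q}, let σ > 0 be a simple singular value of M (i.e. σ² is a simple eigenvalue of M·Mᵀ), and let u ∈ ℝ^p be a unit-norm left singular vector of M associated with σ. Then for every w ∈ ℝ^p, the limit as z → σ, with z ranging over real numbers for which z·I_{p+q} − η(M) is invertible, of 2·(z − σ)·⟨(w,0), (z·I_{p+q} − η(M))⁻¹·(w,0)⟩ equals ⟨u, w⟩². Equivalently, 2·(z − σ)·z·⟨w, (z²·I_p − M·Mᵀ)⁻¹·w⟩ → ⟨u, w⟩². -/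
open Matrix Filter Topology

private lemma dotProduct_finset_sum {n k : ℕ} (x : Fin n → ℝ) (f : Fin k → Fin n → ℝ) :
    x ⬝ᵥ (∑ i, f i) = ∑ i, x ⬝ᵥ f i := by
  simp only [dotProduct, Finset.sum_apply, Finset.mul_sum]
  rw [Finset.sum_comm]

private lemma mulVec_finset_sum {n k : ℕ} (B : Matrix (Fin n) (Fin n) ℝ)
    (f : Fin k → Fin n → ℝ) : B *ᵥ (∑ i, f i) = ∑ i, B *ᵥ f i := by
  ext j
  simp only [Matrix.mulVec, dotProduct, Finset.sum_apply, Finset.mul_sum]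
  rw [Finset.sum_comm]

/-- Overlap of a singular vector via a resolvent limit: if `σ > 0` is a simple singular
value of `M` (i.e. `σ²` is a simple eigenvalue of `MMᵀ`) with unit-norm left singular
vector `u`, then for every `w`, as `z → σ` through points where `zI − η(M)` is invertible,
`2(z − σ)·⟨(w,0),(zI − η(M))⁻¹(w,0)⟩ → ⟨u,w⟩²`; equivalently
`2(z − σ)·z·⟨w,(z²I − MMᵀ)⁻¹w⟩ → ⟨u,w⟩²`. -/
theorem singular_vector_overlap_from_resolvent {p q : ℕ}
    (M : Matrix (Fin p) (Fin q) ℝ) (σ : ℝ) (hσ : 0 < σ)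
    (hsimple : Module.finrank ℝ
      (LinearMap.ker (Matrix.toLin'
        (M * Mᵀ - σ ^ 2 • (1 : Matrix (Fin p) (Fin p) ℝ)))) = 1)
    (u : Fin p → ℝ) (hu_norm : u ⬝ᵥ u = 1) (hu : (M * Mᵀ) *ᵥ u = σ ^ 2 • u)
    (w : Fin p → ℝ) :
    Tendsto (fun z : ℝ => 2 * (z - σ) *
        (Sum.elim w (0 : Fin q → ℝ) ⬝ᵥ
          ((z • (1 : Matrix (Fin p ⊕ Fin q) (Fin p ⊕ Fin q) ℝ) - chiral M)⁻¹ *ᵥ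
            Sum.elim w (0 : Fin q → ℝ))))
      (nhdsWithin σ
        {z : ℝ | IsUnit (z • (1 : Matrix (Fin p ⊕ Fin q) (Fin p ⊕ Fin q) ℝ) - chiral M)})
      (𝓝 ((u ⬝ᵥ w) ^ 2)) ∧
    Tendsto (fun z : ℝ => 2 * (z - σ) * z *
        (w ⬝ᵥ ((z ^ 2 • (1 : Matrix (Fin p) (Fin p) ℝ) - M * Mᵀ)⁻¹ *ᵥ w)))
      (nhdsWithin σ
        {z : ℝ | IsUnit (z • (1 : Matrix (Fin p ⊕ Fin q) (Fin p ⊕ Fin q) ℝ) - chiral M)})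
      (𝓝 ((u ⬝ᵥ w) ^ 2)) := by
  classical
  set S : Set ℝ :=
    {z : ℝ | IsUnit (z • (1 : Matrix (Fin p ⊕ Fin q) (Fin p ⊕ Fin q) ℝ) - chiral M)}
    with hS_def
  set A : Matrix (Fin p) (Fin p) ℝ := M * Mᵀ with hA_def
  have hAT : Aᵀ = A := by rw [hA_def, transpose_mul, transpose_transpose]
  have hA : A.IsHermitian := by
    have : Aᴴ = Aᵀ := by
      ext i j; simp [Matrix.conjTranspose_apply]
    rw [Matrix.IsHermitian, this, hAT]
  set v : Fin p → (Fin p → ℝ) := fun i => ⇑(hA.eigenvectorBasis i) with hv_def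
  set μ : Fin p → ℝ := hA.eigenvalues with hμ_def
  have hAv : ∀ i, A *ᵥ v i = μ i • v i := fun i => hA.mulVec_eigenvectorBasis i
  -- orthonormality as dot products
  have hvv : ∀ i j, v i ⬝ᵥ v j = if i = j then 1 else 0 := by
    intro i j
    have h := (orthonormal_iff_ite.mp hA.eigenvectorBasis.orthonormal) i j
    simp [PiLp.inner_apply, dotProduct, RCLike.inner_apply, conj_trivial] at h
    rw [← h, dotProduct]
    exact Finset.sum_congr rfl fun k _ => mul_comm _ _
  -- expansion in the eigenbasis
  have hexp : ∀ x : Fin p → ℝ, ∑ i, (v i ⬝ᵥ x) • v i = x := by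
    intro x
    have h := congrArg WithLp.ofLp (hA.eigenvectorBasis.sum_repr (WithLp.toLp 2 x))
    have h2 : ∀ i, hA.eigenvectorBasis.repr (WithLp.toLp 2 x) i = v i ⬝ᵥ x := by
      intro i
      rw [OrthonormalBasis.repr_apply_apply]
      simp only [PiLp.inner_apply, dotProduct, RCLike.inner_apply, conj_trivial]
      exact Finset.sum_congr rfl fun k _ => mul_comm _ _
    simp only [h2, WithLp.ofLp_sum, WithLp.ofLp_smul] at h
    exact h
  -- dotting the expansion
  have hdot : ∀ (f : Fin p → ℝ) j, v j ⬝ᵥ (∑ i, f i • v i) = f j := by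
    intro f j
    rw [dotProduct_finset_sum]
    simp [hvv, smul_eq_mul, mul_comm,
      Finset.sum_ite_eq, dotProduct_smul]
  -- symmetry dot product exchange
  have hsym : ∀ (x y : Fin p → ℝ), x ⬝ᵥ (A *ᵥ y) = (A *ᵥ x) ⬝ᵥ y := by
    intro x y
    rw [dotProduct_mulVec, ← hAT, ← mulVec_transpose, transpose_transpose, hAT]
  -- invertibility of z•1 - A when z avoids all eigenvalues
  have hIsUnit : ∀ z : ℝ, (∀ i, z - μ i ≠ 0) →
      IsUnit (z • (1 : Matrix (Fin p) (Fin p) ℝ) - A) := by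
    intro z hz
    rw [← Matrix.mulVec_injective_iff_isUnit]
    have key : ∀ x, (z • (1 : Matrix (Fin p) (Fin p) ℝ) - A) *ᵥ x = 0 → x = 0 := by
      intro x hx
      have hcoef : ∀ j, (z - μ j) * (v j ⬝ᵥ x) = 0 := by
        intro j
        have h1 : v j ⬝ᵥ ((z • (1 : Matrix (Fin p) (Fin p) ℝ) - A) *ᵥ x) = 0 := by
          rw [hx, dotProduct_zero]
        rw [sub_mulVec, smul_mulVec, one_mulVec, dotProduct_sub, dotProduct_smul,
          hsym, hAv, smul_dotProduct, smul_eq_mul, smul_eq_mul] at h1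
        ring_nf
        ring_nf at h1
        linarith
      have hall : ∀ j, v j ⬝ᵥ x = 0 := fun j =>
        (mul_eq_zero.mp (hcoef j)).resolve_left (hz j)
      rw [← hexp x]
      simp [hall]
    intro x y hxy
    have : (z • (1 : Matrix (Fin p) (Fin p) ℝ) - A) *ᵥ (x - y) = 0 := by
      rw [mulVec_sub, hxy, sub_self]
    have := key _ this
    exact sub_eq_zero.mp this
  have hinv : ∀ z : ℝ, (∀ i, z - μ i ≠ 0) → ∀ x y : Fin p → ℝ,
      (z • (1 : Matrix (Fin p) (Fin p) ℝ) - A) *ᵥ y = x →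
      (z • (1 : Matrix (Fin p) (Fin p) ℝ) - A)⁻¹ *ᵥ x = y := by
    intro z hz x y hxy
    have hU := hIsUnit z hz
    rw [← hxy, mulVec_mulVec, Matrix.nonsing_inv_mul _ ((Matrix.isUnit_iff_isUnit_det _).mp hU),
      one_mulVec]
  set c : Fin p → ℝ := fun i => v i ⬝ᵥ w with hc_def
  have hsolve : ∀ z : ℝ, (∀ i, z - μ i ≠ 0) →
      (z • (1 : Matrix (Fin p) (Fin p) ℝ) - A) *ᵥ (∑ i, ((z - μ i)⁻¹ * c i) • v i) = w := by
    intro z hz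
    rw [mulVec_finset_sum]
    have : ∀ i, (z • (1 : Matrix (Fin p) (Fin p) ℝ) - A) *ᵥ (((z - μ i)⁻¹ * c i) • v i)
        = c i • v i := by
      intro i
      rw [mulVec_smul, sub_mulVec, smul_mulVec, one_mulVec, hAv, ← sub_smul, smul_smul]
      congr 1
      field_simp
      exact mul_div_cancel_left₀ _ (hz i)
    simp only [this]
    exact hexp w
  -- key formula for the quadratic form
  have hform : ∀ z : ℝ, (∀ i, z - μ i ≠ 0) →
      w ⬝ᵥ ((z • (1 : Matrix (Fin p) (Fin p) ℝ) - A)⁻¹ *ᵥ w)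
        = ∑ i, (z - μ i)⁻¹ * (c i) ^ 2 := by
    intro z hz
    rw [hinv z hz w _ (hsolve z hz), dotProduct_finset_sum]
    refine Finset.sum_congr rfl fun i _ => ?_
    rw [dotProduct_smul, smul_eq_mul, dotProduct_comm]
    ring
  -- membership in S forces z² away from eigenvalues of A
  have hmvM : ∀ (z : ℝ) (a : Fin p → ℝ) (b : Fin q → ℝ),
      (z • (1 : Matrix (Fin p ⊕ Fin q) (Fin p ⊕ Fin q) ℝ) - chiral M) *ᵥ Sum.elim a b
        = Sum.elim (z • a - M *ᵥ b) (z • b - Mᵀ *ᵥ a) := by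
    intro z a b
    rw [sub_mulVec, smul_mulVec, one_mulVec]
    unfold chiral
    rw [fromBlocks_mulVec]
    funext s
    cases s <;> simp [Matrix.zero_mulVec]
  have hvu : ∀ i, v i ⬝ᵥ v i = 1 := by intro i; rw [hvv]; simp
  have hSz : ∀ z ∈ S, ∀ i, z ^ 2 - μ i ≠ 0 := by
    intro z hz i heq
    have hμi : μ i = z ^ 2 := by linarith [sub_eq_zero.mp heq]
    have hinj : Function.Injective
        ((z • (1 : Matrix (Fin p ⊕ Fin q) (Fin p ⊕ Fin q) ℝ) - chiral M).mulVec) :=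
      Matrix.mulVec_injective_iff_isUnit.mpr hz
    by_cases hz0 : z = 0
    · -- then μ i = 0, so A vᵢ = 0, hence Mᵀ vᵢ = 0, and (vᵢ, 0) is in the kernel
      have hAvi : A *ᵥ v i = 0 := by rw [hAv, hμi, hz0]; simp
      have hMt : Mᵀ *ᵥ v i = 0 := by
        have h0 : (Mᵀ *ᵥ v i) ⬝ᵥ (Mᵀ *ᵥ v i) = 0 := by
          have : v i ⬝ᵥ (A *ᵥ v i) = 0 := by rw [hAvi, dotProduct_zero]
          rw [hA_def, ← mulVec_mulVec, dotProduct_mulVec, ← mulVec_transpose] at this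
          exact this
        exact dotProduct_self_eq_zero.mp h0
      have h1 : (z • (1 : Matrix (Fin p ⊕ Fin q) (Fin p ⊕ Fin q) ℝ) - chiral M) *ᵥ
          Sum.elim (v i) 0 = 0 := by
        rw [hmvM]
        funext s
        cases s <;> simp [hz0, hMt]
      have h2 : Sum.elim (v i) (0 : Fin q → ℝ) = 0 := by
        apply hinj
        rw [h1, Matrix.mulVec_zero]
      have hvi : v i = 0 := by
        funext j
        exact congrFun h2 (Sum.inl j)
      have h3 := hvu i
      rw [hvi] at h3
      simpa using h3
    · have h1 : (z • (1 : Matrix (Fin p ⊕ Fin q) (Fin p ⊕ Fin q) ℝ) - chiral M) *ᵥ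
          Sum.elim (z • v i) (Mᵀ *ᵥ v i) = 0 := by
        rw [hmvM]
        funext s
        cases s with
        | inl j =>
          have : z • z • v i - M *ᵥ (Mᵀ *ᵥ v i) = 0 := by
            rw [mulVec_mulVec, ← hA_def, hAv, hμi, smul_smul]
            funext k
            simp [pow_two]
          simpa using congrFun this j
        | inr j =>
          have : z • (Mᵀ *ᵥ v i) - Mᵀ *ᵥ (z • v i) = 0 := by
            rw [mulVec_smul, sub_self]
          simpa using congrFun this j
      have h2 : Sum.elim (z • v i) (Mᵀ *ᵥ v i) = 0 := by
        apply hinj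
        rw [h1, Matrix.mulVec_zero]
      have hzv : z • v i = 0 := by
        funext j
        exact congrFun h2 (Sum.inl j)
      have hvi0 : v i = 0 := by
        have := smul_eq_zero.mp hzv
        exact this.resolve_left hz0
      have := hvu i
      rw [hvi0] at this
      simpa using this
  -- the second function equals a finite sum of rational functions on S
  set g : ℝ → ℝ := fun z => ∑ i, 2 * (z - σ) * z * ((z ^ 2 - μ i)⁻¹ * (c i) ^ 2) with hg_def
  have heq2 : ∀ z ∈ S,
      2 * (z - σ) * z * (w ⬝ᵥ ((z ^ 2 • (1 : Matrix (Fin p) (Fin p) ℝ) - A)⁻¹ *ᵥ w))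
        = g z := by
    intro z hz
    rw [hform (z ^ 2) (hSz z hz), Finset.mul_sum]
  -- existence of the eigenvalue σ²
  have hcoef_u : ∀ j, μ j * (v j ⬝ᵥ u) = σ ^ 2 * (v j ⬝ᵥ u) := by
    intro j
    have h1 : v j ⬝ᵥ (A *ᵥ u) = v j ⬝ᵥ (σ ^ 2 • u) := by rw [hu]
    rw [hsym, hAv, smul_dotProduct, dotProduct_smul, smul_eq_mul, smul_eq_mul] at h1
    exact h1
  have hu_ne : u ≠ 0 := by
    intro h
    rw [h] at hu_norm
    simpa using hu_norm
  have hex : ∃ i, μ i = σ ^ 2 := by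
    by_contra hcon
    push_neg at hcon
    have hall : ∀ j, v j ⬝ᵥ u = 0 := by
      intro j
      have := hcoef_u j
      have h2 : (μ j - σ ^ 2) * (v j ⬝ᵥ u) = 0 := by ring_nf; linarith [this]
      exact (mul_eq_zero.mp h2).resolve_left (sub_ne_zero.mpr (hcon j))
    have : u = 0 := by rw [← hexp u]; simp [hall]
    exact hu_ne this
  obtain ⟨i₀, hi₀⟩ := hex
  -- the kernel of A - σ²·1
  set K := LinearMap.ker (Matrix.toLin' (A - σ ^ 2 • (1 : Matrix (Fin p) (Fin p) ℝ))) with hK_def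
  have hmemK : ∀ x : Fin p → ℝ, A *ᵥ x = σ ^ 2 • x → x ∈ K := by
    intro x hx
    rw [hK_def, LinearMap.mem_ker, Matrix.toLin'_apply, sub_mulVec, hx, smul_mulVec,
      one_mulVec, sub_self]
  have hvK : ∀ i, μ i = σ ^ 2 → v i ∈ K := by
    intro i hi
    exact hmemK (v i) (by rw [hAv, hi])
  have huK : u ∈ K := hmemK u hu
  -- uniqueness of the eigenvalue index
  have huniq : ∀ j, μ j = σ ^ 2 → j = i₀ := by
    intro j hj
    by_contra hne
    -- two orthonormal vectors in K give finrank K ≥ 2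
    have hli : LinearIndependent ℝ ![v j, v i₀] := by
      rw [LinearIndependent.pair_iff]
      intro s t hst
      have h1 : v j ⬝ᵥ (s • v j + t • v i₀) = s := by
        rw [dotProduct_add, dotProduct_smul, dotProduct_smul, hvv, hvv, if_pos rfl,
          if_neg hne]
        simp
      have h2 : v i₀ ⬝ᵥ (s • v j + t • v i₀) = t := by
        rw [dotProduct_add, dotProduct_smul, dotProduct_smul, hvv, hvv, if_pos rfl,
          if_neg (fun h => hne h.symm)]
        simp
      rw [hst, dotProduct_zero] at h1 h2
      exact ⟨h1.symm, h2.symm⟩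
    set e : Fin 2 → K := ![⟨v j, hvK j hj⟩, ⟨v i₀, hvK i₀ hi₀⟩] with he_def
    have hlie : LinearIndependent ℝ e := by
      apply LinearIndependent.of_comp K.subtype
      have : K.subtype ∘ e = ![v j, v i₀] := by
        funext s
        fin_cases s <;> rfl
      rw [this]
      exact hli
    have hcard := hlie.fintype_card_le_finrank
    rw [hsimple] at hcard
    simp at hcard
  -- the overlap identity
  have hoverlap : (c i₀) ^ 2 = (u ⬝ᵥ w) ^ 2 := by
    have hspan : Submodule.span ℝ {u} = K := by
      apply Submodule.eq_of_le_of_finrank_le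
      · rw [Submodule.span_le, Set.singleton_subset_iff]; exact huK
      · rw [hsimple, finrank_span_singleton hu_ne]
    have hvi₀ : v i₀ ∈ Submodule.span ℝ ({u} : Set (Fin p → ℝ)) := by
      rw [hspan]; exact hvK i₀ hi₀
    obtain ⟨t, ht⟩ := Submodule.mem_span_singleton.mp hvi₀
    have ht2 : t ^ 2 = 1 := by
      have := hvu i₀
      rw [← ht] at this
      rw [smul_dotProduct, dotProduct_smul, smul_eq_mul, smul_eq_mul, hu_norm] at this
      nlinarith
    have hc0 : c i₀ = t * (u ⬝ᵥ w) := by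
      rw [hc_def]
      simp only
      rw [← ht, smul_dotProduct, smul_eq_mul]
    rw [hc0, mul_pow, ht2, one_mul]
  -- limit of each term
  have hLsum : ∑ i, (if μ i = σ ^ 2 then (c i) ^ 2 else 0) = (u ⬝ᵥ w) ^ 2 := by
    rw [Finset.sum_eq_single i₀]
    · rw [if_pos hi₀, hoverlap]
    · intro j _ hj
      rw [if_neg (fun h => hj (huniq j h))]
    · intro h; exact absurd (Finset.mem_univ i₀) h
  have hg_tendsto : Tendsto g (nhdsWithin σ S) (𝓝 ((u ⬝ᵥ w) ^ 2)) := by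
    rw [← hLsum, hg_def]
    apply tendsto_finset_sum
    intro i _
    by_cases hi : μ i = σ ^ 2
    · rw [if_pos hi]
      have hEq : (fun z : ℝ => 2 * (z - σ) * z * ((z ^ 2 - μ i)⁻¹ * (c i) ^ 2))
          =ᶠ[nhdsWithin σ S] (fun z : ℝ => 2 * z * (z + σ)⁻¹ * (c i) ^ 2) := by
        apply Filter.eventuallyEq_of_mem self_mem_nhdsWithin
        intro z hz
        have h1 : z ^ 2 - σ ^ 2 ≠ 0 := by rw [← hi]; exact hSz z hz i
        have hzm : z - σ ≠ 0 := by
          intro h; apply h1; rw [sub_eq_zero] at h; rw [h, sub_self]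
        have hzp : z + σ ≠ 0 := by
          intro h
          apply h1
          have : z = -σ := by linarith
          rw [this]; ring
        simp only [hi]
        field_simp
        ring
      rw [Filter.tendsto_congr' hEq]
      have hcont : Tendsto (fun z : ℝ => 2 * z * (z + σ)⁻¹ * (c i) ^ 2) (𝓝 σ)
          (𝓝 (2 * σ * (σ + σ)⁻¹ * (c i) ^ 2)) := by
        refine Tendsto.mul (Tendsto.mul ?_ ?_) tendsto_const_nhds
        · exact tendsto_const_nhds.mul tendsto_id
        · exact Tendsto.inv₀ (tendsto_id.add tendsto_const_nhds) (by positivity)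
      have hval : 2 * σ * (σ + σ)⁻¹ * (c i) ^ 2 = (c i) ^ 2 := by
        have : σ + σ = 2 * σ := by ring
        rw [this, mul_inv_cancel₀ (by positivity), one_mul]
      rw [hval] at hcont
      exact hcont.mono_left nhdsWithin_le_nhds
    · rw [if_neg hi]
      have hne : σ ^ 2 - μ i ≠ 0 := sub_ne_zero.mpr (fun h => hi h.symm)
      have hcont : Tendsto (fun z : ℝ => 2 * (z - σ) * z * ((z ^ 2 - μ i)⁻¹ * (c i) ^ 2))
          (𝓝 σ) (𝓝 (2 * (σ - σ) * σ * ((σ ^ 2 - μ i)⁻¹ * (c i) ^ 2))) := by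
        refine Tendsto.mul ?_ (Tendsto.mul ?_ tendsto_const_nhds)
        · exact (tendsto_const_nhds.mul (tendsto_id.sub tendsto_const_nhds)).mul tendsto_id
        · refine Tendsto.inv₀ ?_ hne
          exact (((continuous_pow 2).tendsto σ).sub tendsto_const_nhds)
      have hval : 2 * (σ - σ) * σ * ((σ ^ 2 - μ i)⁻¹ * (c i) ^ 2) = 0 := by ring
      rw [hval] at hcont
      exact hcont.mono_left nhdsWithin_le_nhds
  -- second limit
  have T2 : Tendsto (fun z : ℝ => 2 * (z - σ) * z *
      (w ⬝ᵥ ((z ^ 2 • (1 : Matrix (Fin p) (Fin p) ℝ) - M * Mᵀ)⁻¹ *ᵥ w)))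
      (nhdsWithin σ S) (𝓝 ((u ⬝ᵥ w) ^ 2)) := by
    apply Tendsto.congr' _ hg_tendsto
    apply Filter.eventuallyEq_of_mem self_mem_nhdsWithin
    intro z hz
    rw [← hA_def]
    exact (heq2 z hz).symm
  -- reduce the first limit to the second
  have heq1 : ∀ z ∈ S,
      2 * (z - σ) * (Sum.elim w (0 : Fin q → ℝ) ⬝ᵥ
        ((z • (1 : Matrix (Fin p ⊕ Fin q) (Fin p ⊕ Fin q) ℝ) - chiral M)⁻¹ *ᵥ
          Sum.elim w (0 : Fin q → ℝ)))
      = 2 * (z - σ) * z *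
        (w ⬝ᵥ ((z ^ 2 • (1 : Matrix (Fin p) (Fin p) ℝ) - A)⁻¹ *ᵥ w)) := by
    intro z hz
    have hz2 := hSz z hz
    have hU2 := hIsUnit (z ^ 2) hz2
    set r := (z ^ 2 • (1 : Matrix (Fin p) (Fin p) ℝ) - A)⁻¹ *ᵥ w with hr_def
    have hr : (z ^ 2 • (1 : Matrix (Fin p) (Fin p) ℝ) - A) *ᵥ r = w := by
      rw [hr_def, mulVec_mulVec,
        Matrix.mul_nonsing_inv _ ((Matrix.isUnit_iff_isUnit_det _).mp hU2), one_mulVec]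
    have hx : (z • (1 : Matrix (Fin p ⊕ Fin q) (Fin p ⊕ Fin q) ℝ) - chiral M) *ᵥ
        Sum.elim (z • r) (Mᵀ *ᵥ r) = Sum.elim w (0 : Fin q → ℝ) := by
      have hfst : z • (z • r) - M *ᵥ (Mᵀ *ᵥ r) = w := by
        rw [← hr, sub_mulVec, smul_mulVec, one_mulVec, smul_smul, mulVec_mulVec,
          ← hA_def, ← pow_two]
      have hsnd : z • (Mᵀ *ᵥ r) - Mᵀ *ᵥ (z • r) = (0 : Fin q → ℝ) := by
        rw [mulVec_smul, sub_self]
      rw [hmvM, hfst, hsnd]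
    have hinvb : (z • (1 : Matrix (Fin p ⊕ Fin q) (Fin p ⊕ Fin q) ℝ) - chiral M)⁻¹ *ᵥ
        Sum.elim w (0 : Fin q → ℝ) = Sum.elim (z • r) (Mᵀ *ᵥ r) := by
      rw [← hx, mulVec_mulVec,
        Matrix.nonsing_inv_mul _ ((Matrix.isUnit_iff_isUnit_det _).mp hz), one_mulVec]
    rw [hinvb, sumElim_dotProduct_sumElim, zero_dotProduct, add_zero, dotProduct_smul,
      smul_eq_mul]
    ring
  have T1 : Tendsto (fun z : ℝ => 2 * (z - σ) *
      (Sum.elim w (0 : Fin q → ℝ) ⬝ᵥ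
        ((z • (1 : Matrix (Fin p ⊕ Fin q) (Fin p ⊕ Fin q) ℝ) - chiral M)⁻¹ *ᵥ
          Sum.elim w (0 : Fin q → ℝ))))
      (nhdsWithin σ S) (𝓝 ((u ⬝ᵥ w) ^ 2)) := by
    apply Tendsto.congr' _ T2
    apply Filter.eventuallyEq_of_mem self_mem_nhdsWithin
    intro z hz
    rw [← hA_def]
    exact (heq1 z hz).symm
  exact ⟨T1, T2⟩
end
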